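/- There exists an absolute constant C > 0 such that the following holds. Let n > m ≥ 0 be integers and let ξ₁,…,ξₙ be an m-dependent sequence of mean-zero random vectors in ℝ^d, i.e. {ξ₁,…,ξᵢ} is independent of {ξ_{i+m+1},…,ξₙ} for every i. Set W := Σ_{i=1}^n ξᵢ, assume Var(W) = I_d and E[|ξᵢ|⁶] ≤ δ⁶ for every i and some δ > 0. Let m̃ := m ∨ 1, and for u ∈ {1,…,n} set A_u := {v : |v−u| ≤ m}, for v ∈ A_u set A_{uv} := {r : |r−u| ≤ m or |r−v| ≤ m}, and W^{(uv)} := W − Σ_{r ∈ A_{uv}} ξ_r. Then for all u ∈ {1,…,n}, v ∈ A_u and r ∈ A_{uv}: E[(ξ_r · W^{(uv)})²] ≤ C ( E[|ξ_r|²] + m̃² δ⁴ ). -/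

import Mathlib

open MeasureTheory ProbabilityTheory Real Matrix Filter
open scoped ENNReal NNReal Topology RealInnerProductSpace

/-!
Split `W^{(uv)}` into the indices more than `m` below `min(u,v,r)`, those more than `m` above
`max(u,v,r)`, and the at most `2m+1` remaining ones, all of which lie within `m` of `r`. The
remaining part is bounded by Cauchy–Schwarz and fourth moments. A far block `B` is independent
of `ξ_r`, so `E⟨ξ_r, B⟩² ≤ β E|ξ_r|²` whenever `E⟨x, B⟩² ≤ β |x|²` for all `x`. Such a `β`
comes from `Var W = I`: `B` is independent of the sum on the other side of a gap of `m`
indices, so `E⟨x, B⟩² ≤ 2|x|² + 4 E⟨x, gap⟩² ≤ (2 + 8 m² δ²) |x|²`.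
-/

noncomputable section

namespace Paper

/-- `Ψ(x) = x (|log x| ∨ 1)`. -/
def Psi (x : ℝ) : ℝ := x * max |Real.log x| 1

/-- Hilbert–Schmidt (Frobenius) norm of a matrix. -/
def hsNorm {d : ℕ} (M : Matrix (Fin d) (Fin d) ℝ) : ℝ :=
  Real.sqrt (∑ j, ∑ k, M j k ^ 2)

/-- Operator norm of a matrix, acting on Euclidean space. -/
def opNorm {d : ℕ} (M : Matrix (Fin d) (Fin d) ℝ) : ℝ :=
  ‖LinearMap.toContinuousLinearMap (Matrix.toEuclideanLin M)‖

/-- Multiplication of a Euclidean vector by a matrix. -/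
def mulVecE {d : ℕ} (M : Matrix (Fin d) (Fin d) ℝ) (x : EuclideanSpace ℝ (Fin d)) :
    EuclideanSpace ℝ (Fin d) :=
  (WithLp.equiv 2 (Fin d → ℝ)).symm (M.mulVec ((WithLp.equiv 2 (Fin d → ℝ)) x))

/-- Covariance matrix of a random vector. -/
def covMatrix {d : ℕ} {Ω : Type*} [MeasurableSpace Ω] (μ : Measure Ω)
    (Y : Ω → EuclideanSpace ℝ (Fin d)) : Matrix (Fin d) (Fin d) ℝ :=
  Matrix.of fun j k =>
    (∫ ω, Y ω j * Y ω k ∂μ) - (∫ ω, Y ω j ∂μ) * (∫ ω, Y ω k ∂μ)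

/-- The standard Gaussian distribution `N(0, I_d)` on `ℝ^d`. -/
def stdGaussian (d : ℕ) : Measure (EuclideanSpace ℝ (Fin d)) :=
  (Measure.pi fun _ : Fin d => gaussianReal 0 1).map
    (WithLp.equiv 2 (Fin d → ℝ)).symm

/-- The centered Gaussian distribution `N(0, S)` on `ℝ^d` for a positive semidefinite `S`,
realized as the pushforward of the standard Gaussian by the square root of `S`. -/
def gaussianOf {d : ℕ} {S : Matrix (Fin d) (Fin d) ℝ} (hS : S.PosSemidef) :
    Measure (EuclideanSpace ℝ (Fin d)) :=
  (stdGaussian d).map (mulVecE ((hS.1.eigenvectorUnitary : Matrix (Fin d) (Fin d) ℝ) *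
    diagonal (fun i => Real.sqrt (hS.1.eigenvalues i)) *
    (star hS.1.eigenvectorUnitary : Matrix (Fin d) (Fin d) ℝ)))

/-- The largest eigenvalue of a symmetric matrix. -/
def lambdaMax {d : ℕ} {A : Matrix (Fin d) (Fin d) ℝ} (hA : A.IsHermitian) : ℝ :=
  ⨆ i, hA.eigenvalues i

/-- `Λ₁(A) = √(∑_{j=1}^d λ_j(A)²)` for the eigenvalues `λ₁(A) ≥ ⋯ ≥ λ_d(A)`. -/
def Lambda1 {d : ℕ} {A : Matrix (Fin d) (Fin d) ℝ} (hA : A.IsHermitian) : ℝ :=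
  Real.sqrt (∑ i, hA.eigenvalues i ^ 2)

/-- `Λ₂(A) = √(∑_{j=2}^d λ_j(A)²)` for the eigenvalues `λ₁(A) ≥ ⋯ ≥ λ_d(A)`. -/
def Lambda2 {d : ℕ} {A : Matrix (Fin d) (Fin d) ℝ} (hA : A.IsHermitian) : ℝ :=
  Real.sqrt ((∑ i, hA.eigenvalues i ^ 2) - lambdaMax hA ^ 2)

/-- `κ(A) = (Λ₁(A) Λ₂(A))^{-1/2}`. -/
def kappa {d : ℕ} {A : Matrix (Fin d) (Fin d) ℝ} (hA : A.IsHermitian) : ℝ :=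
  (Lambda1 hA * Lambda2 hA) ^ (-(1 : ℝ) / 2)

/-- `near m u v` means `|u - v| ≤ m` for indices `u v`. -/
abbrev near (m : ℕ) {n : ℕ} (u v : Fin n) : Prop :=
  (u : ℕ) ≤ (v : ℕ) + m ∧ (v : ℕ) ≤ (u : ℕ) + m

/-- `m`-dependence of the sequence `ξ₁, …, ξₙ`: for every `i`, `{ξ₁, …, ξᵢ}` is independent of
`{ξ_{i+m+1}, …, ξₙ}` (written with `0`-based indices). -/
def MDependent {n : ℕ} {Ω E : Type*} [MeasurableSpace Ω] [MeasurableSpace E]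
    (m : ℕ) (ξ : Fin n → Ω → E) (μ : Measure Ω) : Prop :=
  ∀ i : ℕ, IndepFun (fun ω (j : {j : Fin n // (j : ℕ) < i}) => ξ j.1 ω)
    (fun ω (j : {j : Fin n // i + m ≤ (j : ℕ)}) => ξ j.1 ω) μ

/-- `W^{(uv)} = W - ∑_{r ∈ A_{uv}} ξ_r`, the sum of the `ξ_r` with `r` away from both `u`
and `v`. -/
def Wuv {d n : ℕ} {Ω : Type} (m : ℕ) (ξ : Fin n → Ω → EuclideanSpace ℝ (Fin d))
    (u v : Fin n) (ω : Ω) : EuclideanSpace ℝ (Fin d) :=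
  ∑ r ∈ Finset.univ.filter (fun r => ¬(near m u r ∨ near m v r)), ξ r ω


end Paper

lemma pow_le_pow_add_pow_div_pow {y δ : ℝ} {k l : ℕ} (hy : 0 ≤ y) (hδ : 0 < δ) (hkl : k ≤ l) :
    y ^ k ≤ δ ^ k + y ^ l / δ ^ (l - k) := by
  rcases le_total y δ with hyδ | hδy
  · have : y ^ k ≤ δ ^ k := pow_le_pow_left₀ hy hyδ k
    have : 0 ≤ y ^ l / δ ^ (l - k) := by positivity
    linarith
  · have hsplit : y ^ l = y ^ k * y ^ (l - k) := by rw [← pow_add, Nat.add_sub_cancel' hkl]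
    have : y ^ k ≤ y ^ l / δ ^ (l - k) := by
      rw [le_div_iff₀ (by positivity), hsplit]
      exact mul_le_mul_of_nonneg_left (pow_le_pow_left₀ hδ.le hδy _) (by positivity)
    linarith [pow_nonneg hδ.le k]

lemma real_inner_sq_le_norm_sq_mul_norm_sq {E : Type*} [NormedAddCommGroup E]
    [InnerProductSpace ℝ E] (x y : E) : ⟪x, y⟫ ^ 2 ≤ ‖x‖ ^ 2 * ‖y‖ ^ 2 := by
  rw [← mul_pow, ← sq_abs]
  exact pow_le_pow_left₀ (abs_nonneg _) (abs_real_inner_le_norm x y) 2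

lemma Finset.sum_eq_add_add_sum_sdiff {ι M : Type*} [AddCommMonoid M] [DecidableEq ι]
    {s t u : Finset ι} (hs : s ⊆ u) (ht : t ⊆ u) (hst : Disjoint s t) (f : ι → M) :
    ∑ i ∈ u, f i = ∑ i ∈ s, f i + ∑ i ∈ t, f i + ∑ i ∈ u \ (s ∪ t), f i := by
  rw [← Finset.sum_union hst, add_comm, Finset.sum_sdiff (Finset.union_subset hs ht)]

namespace MeasureTheory

open Finset

variable {Ω : Type*} [MeasurableSpace Ω] {μ : Measure Ω}

lemma integral_pow_le_two_mul_pow [IsProbabilityMeasure μ] {f : Ω → ℝ} {δ : ℝ} {k l : ℕ}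
    (hf : 0 ≤ f) (hδ : 0 < δ) (hkl : k ≤ l) (hfl : Integrable (fun ω => f ω ^ l) μ)
    (hδl : ∫ ω, f ω ^ l ∂μ ≤ δ ^ l) :
    ∫ ω, f ω ^ k ∂μ ≤ 2 * δ ^ k := by
  have hpow : δ ^ l / δ ^ (l - k) = δ ^ k := by
    rw [div_eq_iff (by positivity), ← pow_add, Nat.add_sub_cancel' hkl]
  calc ∫ ω, f ω ^ k ∂μ ≤ ∫ ω, (δ ^ k + f ω ^ l / δ ^ (l - k)) ∂μ :=
        integral_mono_of_nonneg (.of_forall fun ω => pow_nonneg (hf ω) k)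
          ((integrable_const _).add (hfl.div_const _))
          (.of_forall fun ω => pow_le_pow_add_pow_div_pow (hf ω) hδ hkl)
    _ = δ ^ k + (∫ ω, f ω ^ l ∂μ) / δ ^ (l - k) := by
        rw [integral_add (integrable_const _) (hfl.div_const _), integral_const, integral_div]
        simp
    _ ≤ δ ^ k + δ ^ l / δ ^ (l - k) := by gcongr
    _ = 2 * δ ^ k := by rw [hpow]; ring

lemma integral_sum_sq_le {ι : Type*} (S : Finset ι) {f : ι → Ω → ℝ} {c : ℝ}
    (hf : ∀ i ∈ S, Integrable (fun ω => f i ω ^ 2) μ) (hc : ∀ i ∈ S, ∫ ω, f i ω ^ 2 ∂μ ≤ c) :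
    ∫ ω, (∑ i ∈ S, f i ω) ^ 2 ∂μ ≤ #S ^ 2 * c := by
  calc ∫ ω, (∑ i ∈ S, f i ω) ^ 2 ∂μ ≤ ∫ ω, #S * ∑ i ∈ S, f i ω ^ 2 ∂μ :=
        integral_mono_of_nonneg (.of_forall fun ω => sq_nonneg _)
          ((integrable_finsetSum S hf).const_mul _)
          (.of_forall fun ω => sq_sum_le_card_mul_sum_sq)
    _ = #S * ∑ i ∈ S, ∫ ω, f i ω ^ 2 ∂μ := by
        rw [integral_const_mul, integral_finsetSum S hf]
    _ ≤ #S * ∑ _i ∈ S, c := by gcongr with i hi; exact hc i hi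
    _ = #S ^ 2 * c := by rw [sum_const, nsmul_eq_mul]; ring

lemma integral_add_add_sq_le {A B C : Ω → ℝ} (hA : Integrable (fun ω => A ω ^ 2) μ)
    (hB : Integrable (fun ω => B ω ^ 2) μ) (hC : Integrable (fun ω => C ω ^ 2) μ) :
    ∫ ω, (A ω + B ω + C ω) ^ 2 ∂μ ≤
      3 * (∫ ω, A ω ^ 2 ∂μ + ∫ ω, B ω ^ 2 ∂μ + ∫ ω, C ω ^ 2 ∂μ) := by
  calc ∫ ω, (A ω + B ω + C ω) ^ 2 ∂μ ≤ ∫ ω, 3 * (A ω ^ 2 + B ω ^ 2 + C ω ^ 2) ∂μ :=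
        integral_mono_of_nonneg (.of_forall fun ω => sq_nonneg _)
          (((hA.add hB).add hC).const_mul 3) (.of_forall fun ω => by
            nlinarith [sq_nonneg (A ω - B ω), sq_nonneg (A ω - C ω), sq_nonneg (B ω - C ω)])
    _ = 3 * (∫ ω, A ω ^ 2 ∂μ + ∫ ω, B ω ^ 2 ∂μ + ∫ ω, C ω ^ 2 ∂μ) := by
        rw [integral_const_mul, integral_add _ hC, integral_add hA hB]
        exact hA.add hB

section InnerProductSpace

variable {E : Type*} [NormedAddCommGroup E] [InnerProductSpace ℝ E]

lemma integrable_inner_sq {X Y : Ω → E} (hX : MemLp X 4 μ) (hY : MemLp Y 4 μ) :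
    Integrable (fun ω => ⟪X ω, Y ω⟫ ^ 2) μ := by
  have hX4 : Integrable (fun ω => ‖X ω‖ ^ 4) μ := hX.integrable_norm_pow (by norm_num)
  have hY4 : Integrable (fun ω => ‖Y ω‖ ^ 4) μ := hY.integrable_norm_pow (by norm_num)
  refine (hX4.add hY4).mono' ((hX.1.inner hY.1).pow 2) (.of_forall fun ω => ?_)
  rw [Real.norm_eq_abs, abs_of_nonneg (sq_nonneg _), Pi.add_apply]
  nlinarith [real_inner_sq_le_norm_sq_mul_norm_sq (X ω) (Y ω), sq_nonneg (‖X ω‖ ^ 2 - ‖Y ω‖ ^ 2)]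

lemma integral_inner_sum_sq_le {ι : Type*} (S : Finset ι) {X : Ω → E} {Y : ι → Ω → E}
    (hX : MemLp X 4 μ) (hY : ∀ i ∈ S, MemLp (Y i) 4 μ) {c : ℝ} (hXc : ∫ ω, ‖X ω‖ ^ 4 ∂μ ≤ c)
    (hYc : ∀ i ∈ S, ∫ ω, ‖Y i ω‖ ^ 4 ∂μ ≤ c) :
    ∫ ω, ⟪X ω, ∑ i ∈ S, Y i ω⟫ ^ 2 ∂μ ≤ #S ^ 2 * c := by
  have hX4 : Integrable (fun ω => ‖X ω‖ ^ 4) μ := hX.integrable_norm_pow (by norm_num)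
  simp_rw [inner_sum]
  refine integral_sum_sq_le S (fun i hi => integrable_inner_sq hX (hY i hi)) fun i hi => ?_
  have hY4 : Integrable (fun ω => ‖Y i ω‖ ^ 4) μ := (hY i hi).integrable_norm_pow (by norm_num)
  calc ∫ ω, ⟪X ω, Y i ω⟫ ^ 2 ∂μ ≤ ∫ ω, (‖X ω‖ ^ 4 + ‖Y i ω‖ ^ 4) / 2 ∂μ := by
        refine integral_mono_of_nonneg (.of_forall fun ω => sq_nonneg _)
          ((hX4.add hY4).div_const 2) (.of_forall fun ω => ?_)
        nlinarith [real_inner_sq_le_norm_sq_mul_norm_sq (X ω) (Y i ω),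
          sq_nonneg (‖X ω‖ ^ 2 - ‖Y i ω‖ ^ 2)]
    _ = ((∫ ω, ‖X ω‖ ^ 4 ∂μ) + ∫ ω, ‖Y i ω‖ ^ 4 ∂μ) / 2 := by
        rw [integral_div, integral_add hX4 hY4]
    _ ≤ c := by linarith [hYc i hi]

end InnerProductSpace

end MeasureTheory

namespace ProbabilityTheory

open MeasureTheory

variable {Ω : Type*} [MeasurableSpace Ω] {μ : Measure Ω}

lemma IndepFun.integral_sq_le_of_integral_eq_zero {A B C : Ω → ℝ} (hAB : IndepFun A B μ)
    (hA : MemLp A 2 μ) (hB : MemLp B 2 μ) (hC : MemLp C 2 μ) (hB0 : ∫ ω, B ω ∂μ = 0) :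
    ∫ ω, A ω ^ 2 ∂μ ≤ 2 * ∫ ω, (A ω + B ω + C ω) ^ 2 ∂μ + 4 * ∫ ω, C ω ^ 2 ∂μ := by
  have hAB_int : Integrable (A * B) μ := hA.integrable_mul hB
  have hAB0 : ∫ ω, (A * B) ω ∂μ = 0 := by
    rw [hAB.integral_mul_eq_mul_integral hA.1 hB.1, hB0, mul_zero]
  have hA2 := hA.integrable_sq
  have hC2 := hC.integrable_sq
  -- independence kills the cross term `AB`; `2AC ≥ -A²/2 - 2C²` is the only lossy step
  have hmono : ∫ ω, (A ω ^ 2 / 2 + 2 * (A * B) ω - 2 * C ω ^ 2) ∂μ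
      ≤ ∫ ω, (A ω + B ω + C ω) ^ 2 ∂μ := by
    refine integral_mono (((hA2.div_const 2).add (hAB_int.const_mul 2)).sub (hC2.const_mul 2))
      ((hA.add hB).add hC).integrable_sq fun ω => ?_
    simp only [Pi.mul_apply]
    nlinarith [sq_nonneg (A ω + 2 * C ω), sq_nonneg (B ω + C ω)]
  rw [integral_sub (f := fun ω => A ω ^ 2 / 2 + 2 * (A * B) ω) (g := fun ω => 2 * C ω ^ 2)
      ((hA2.div_const 2).add (hAB_int.const_mul 2)) (hC2.const_mul 2),
    integral_add (hA2.div_const 2) (hAB_int.const_mul 2), integral_div, integral_const_mul,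
    integral_const_mul, hAB0] at hmono
  linarith

variable {E : Type*} [NormedAddCommGroup E] [InnerProductSpace ℝ E] [MeasurableSpace E]
  [BorelSpace E] [SecondCountableTopology E]

lemma IndepFun.integral_inner_sq_le [IsFiniteMeasure μ] {X Y : Ω → E} (hXY : IndepFun X Y μ)
    (hX : MemLp X 2 μ) (hY : MemLp Y 2 μ) {β : ℝ} (hβ0 : 0 ≤ β)
    (hβ : ∀ x, ∫ ω, ⟪x, Y ω⟫ ^ 2 ∂μ ≤ β * ‖x‖ ^ 2) :
    ∫ ω, ⟪X ω, Y ω⟫ ^ 2 ∂μ ≤ β * ∫ ω, ‖X ω‖ ^ 2 ∂μ := by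
  set F : E × E → ℝ≥0∞ := fun p => ENNReal.ofReal (⟪p.1, p.2⟫ ^ 2)
  have hFmeas : Measurable F := ((measurable_fst.inner measurable_snd).pow_const 2).ennreal_ofReal
  have hXm := hX.1.aemeasurable
  have hYm := hY.1.aemeasurable
  have hinner : ∀ x, ∫⁻ ω, F (x, Y ω) ∂μ ≤ ENNReal.ofReal (β * ‖x‖ ^ 2) := by
    intro x
    have hint : Integrable (fun ω => ⟪x, Y ω⟫ ^ 2) μ := (hY.const_inner x).integrable_sq
    rw [← ofReal_integral_eq_lintegral_ofReal hint (.of_forall fun ω => sq_nonneg _)]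
    exact ENNReal.ofReal_le_ofReal (hβ x)
  -- by independence the joint law is the product of the marginals, so Tonelli applies
  have hfubini : ∫⁻ ω, F (X ω, Y ω) ∂μ ≤ ∫⁻ ω, ENNReal.ofReal (β * ‖X ω‖ ^ 2) ∂μ := by
    rw [← lintegral_map' hFmeas.aemeasurable (hXm.prodMk hYm),
      (indepFun_iff_map_prod_eq_prod_map_map hXm hYm).1 hXY, lintegral_prod _ hFmeas.aemeasurable,
      ← lintegral_map' (f := fun x => ENNReal.ofReal (β * ‖x‖ ^ 2)) (by fun_prop) hXm]
    refine lintegral_mono fun x => ?_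
    rw [lintegral_map' (f := fun y => F (x, y))
      (hFmeas.comp measurable_prodMk_left).aemeasurable hYm]
    exact hinner x
  rw [integral_eq_lintegral_of_nonneg_ae (.of_forall fun ω => sq_nonneg _)
    ((hX.1.inner hY.1).pow 2), ← integral_const_mul]
  refine ENNReal.toReal_le_of_le_ofReal (integral_nonneg fun ω => by positivity) ?_
  rw [ofReal_integral_eq_lintegral_ofReal
    ((hX.integrable_norm_pow (p := 2) (by norm_num)).const_mul β)
    (.of_forall fun ω => by positivity)]
  exact hfubini

end ProbabilityTheory

namespace Paper

open Finset

section

variable {Ω : Type*} [MeasurableSpace Ω] {μ : Measure Ω} {d : ℕ}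

lemma inner_sq_eq_sum_sum (x y : EuclideanSpace ℝ (Fin d)) :
    ⟪x, y⟫ ^ 2 = ∑ j, ∑ k, x j * x k * (y j * y k) := by
  simp only [PiLp.inner_apply, RCLike.inner_apply, conj_trivial, sq, sum_mul_sum]
  exact sum_congr rfl fun j _ => sum_congr rfl fun k _ => by ring

lemma integral_inner_sq_eq_sum_covMatrix [IsFiniteMeasure μ] {Y : Ω → EuclideanSpace ℝ (Fin d)}
    (hY : MemLp Y 2 μ) (hY0 : ∫ ω, Y ω ∂μ = 0) (x : EuclideanSpace ℝ (Fin d)) :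
    ∫ ω, ⟪x, Y ω⟫ ^ 2 ∂μ = ∑ j, ∑ k, x j * x k * covMatrix μ Y j k := by
  have hcoord : ∀ j, MemLp (fun ω => Y ω j) 2 μ := fun j => by
    simpa [EuclideanSpace.inner_single_left] using
      hY.const_inner (𝕜 := ℝ) (EuclideanSpace.single j (1 : ℝ))
  have hcoord0 : ∀ j, ∫ ω, Y ω j ∂μ = 0 := fun j => by
    simpa [EuclideanSpace.inner_single_left, hY0] using
      integral_inner (𝕜 := ℝ) (hY.integrable one_le_two) (EuclideanSpace.single j (1 : ℝ))
  have hprod : ∀ j k, Integrable (fun ω => Y ω j * Y ω k) μ := fun j k =>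
    (hcoord j).integrable_mul (hcoord k)
  simp_rw [inner_sq_eq_sum_sum]
  rw [integral_finsetSum _ fun j _ => integrable_finsetSum _ fun k _ => (hprod j k).const_mul _]
  refine sum_congr rfl fun j _ => ?_
  rw [integral_finsetSum _ fun k _ => (hprod j k).const_mul _]
  refine sum_congr rfl fun k _ => ?_
  simp [covMatrix, integral_const_mul, hcoord0]

lemma integral_inner_sum_sq_le_norm_sq [IsProbabilityMeasure μ] {ι : Type*} [Fintype ι]
    [DecidableEq ι] {ξ : ι → Ω → EuclideanSpace ℝ (Fin d)} (hξ : ∀ i, MemLp (ξ i) 2 μ)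
    (hmean : ∀ i, ∫ ω, ξ i ω ∂μ = 0) (hcov : covMatrix μ (fun ω => ∑ i, ξ i ω) = 1) {c : ℝ}
    (hc0 : 0 ≤ c) (hc : ∀ i, ∫ ω, ‖ξ i ω‖ ^ 2 ∂μ ≤ c) {S T : Finset ι} (hST : Disjoint S T)
    (hind : IndepFun (fun ω => ∑ i ∈ S, ξ i ω) (fun ω => ∑ i ∈ T, ξ i ω) μ) {k : ℕ}
    (hk : #(univ \ (S ∪ T)) ≤ k) (x : EuclideanSpace ℝ (Fin d)) :
    ∫ ω, ⟪x, ∑ i ∈ S, ξ i ω⟫ ^ 2 ∂μ ≤ (2 + 4 * k ^ 2 * c) * ‖x‖ ^ 2 := by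
  set G := univ \ (S ∪ T)
  have hsum : ∀ U : Finset ι, MemLp (fun ω => ∑ i ∈ U, ξ i ω) 2 μ := fun U =>
    memLp_finsetSum U fun i _ => hξ i
  have hsum0 : ∀ U : Finset ι, ∫ ω, ∑ i ∈ U, ξ i ω ∂μ = 0 := fun U => by
    rw [integral_finsetSum U fun i _ => (hξ i).integrable one_le_two]
    exact sum_eq_zero fun i _ => hmean i
  have hW : ∫ ω, ⟪x, ∑ i, ξ i ω⟫ ^ 2 ∂μ = ‖x‖ ^ 2 := by
    rw [integral_inner_sq_eq_sum_covMatrix (hsum univ) (hsum0 univ), hcov,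
      EuclideanSpace.norm_sq_eq]
    simp [Matrix.one_apply, sq]
  have hG : ∫ ω, ⟪x, ∑ i ∈ G, ξ i ω⟫ ^ 2 ∂μ ≤ #G ^ 2 * (‖x‖ ^ 2 * c) := by
    simp_rw [inner_sum]
    refine integral_sum_sq_le G (fun i _ => ((hξ i).const_inner x).integrable_sq) fun i _ => ?_
    calc ∫ ω, ⟪x, ξ i ω⟫ ^ 2 ∂μ ≤ ∫ ω, ‖x‖ ^ 2 * ‖ξ i ω‖ ^ 2 ∂μ :=
          integral_mono_of_nonneg (.of_forall fun ω => sq_nonneg _)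
            (((hξ i).integrable_norm_pow two_ne_zero).const_mul _)
            (.of_forall fun ω => real_inner_sq_le_norm_sq_mul_norm_sq _ _)
      _ ≤ ‖x‖ ^ 2 * c := by rw [integral_const_mul]; gcongr; exact hc i
  have hST_inner : IndepFun (fun ω => ⟪x, ∑ i ∈ S, ξ i ω⟫) (fun ω => ⟪x, ∑ i ∈ T, ξ i ω⟫) μ :=
    hind.comp (measurable_const.inner measurable_id) (measurable_const.inner measurable_id)
  have hA := hST_inner.integral_sq_le_of_integral_eq_zero ((hsum S).const_inner x)
    ((hsum T).const_inner x) ((hsum G).const_inner x)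
    (by rw [integral_inner ((hsum T).integrable one_le_two), hsum0, inner_zero_right])
  have hsplit : ∀ ω, ∑ i ∈ S, ξ i ω + ∑ i ∈ T, ξ i ω + ∑ i ∈ G, ξ i ω = ∑ i, ξ i ω := fun ω =>
    (sum_eq_add_add_sum_sdiff (subset_univ S) (subset_univ T) hST _).symm
  simp only [← inner_add_right, hsplit, hW] at hA
  have hGk : (#G : ℝ) ^ 2 ≤ k ^ 2 := by exact_mod_cast Nat.pow_le_pow_left hk 2
  nlinarith [mul_le_mul_of_nonneg_right hGk (mul_nonneg (sq_nonneg ‖x‖) hc0)]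

lemma integral_inner_sum_sq_le_integral_norm_sq [IsProbabilityMeasure μ] {ι : Type*}
    [Fintype ι] [DecidableEq ι] {ξ : ι → Ω → EuclideanSpace ℝ (Fin d)} (hξ : ∀ i, MemLp (ξ i) 2 μ)
    (hmean : ∀ i, ∫ ω, ξ i ω ∂μ = 0) (hcov : covMatrix μ (fun ω => ∑ i, ξ i ω) = 1) {c : ℝ}
    (hc0 : 0 ≤ c) (hc : ∀ i, ∫ ω, ‖ξ i ω‖ ^ 2 ∂μ ≤ c) {S T : Finset ι} (hST : Disjoint S T)
    (hind : IndepFun (fun ω => ∑ i ∈ S, ξ i ω) (fun ω => ∑ i ∈ T, ξ i ω) μ) {k : ℕ}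
    (hk : #(univ \ (S ∪ T)) ≤ k) {X : Ω → EuclideanSpace ℝ (Fin d)}
    (hXS : IndepFun X (fun ω => ∑ i ∈ S, ξ i ω) μ) (hX : MemLp X 2 μ) :
    ∫ ω, ⟪X ω, ∑ i ∈ S, ξ i ω⟫ ^ 2 ∂μ ≤ (2 + 4 * k ^ 2 * c) * ∫ ω, ‖X ω‖ ^ 2 ∂μ :=
  hXS.integral_inner_sq_le hX (memLp_finsetSum S fun i _ => hξ i) (by positivity)
    (integral_inner_sum_sq_le_norm_sq hξ hmean hcov hc0 hc hST hind hk)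

theorem MDependent.indepFun_sum {n m : ℕ} {E : Type*} [AddCommMonoid E] [MeasurableSpace E]
    [MeasurableAdd₂ E] [IsZeroOrProbabilityMeasure μ] {ξ : Fin n → Ω → E}
    (h : MDependent m ξ μ) {S T : Finset (Fin n)} (hST : ∀ s ∈ S, ∀ t ∈ T, (s : ℕ) + m < t) :
    IndepFun (fun ω => ∑ s ∈ S, ξ s ω) (fun ω => ∑ t ∈ T, ξ t ω) μ := by
  rcases S.eq_empty_or_nonempty with rfl | hS
  · simpa using indepFun_const_left (0 : E) (fun ω => ∑ t ∈ T, ξ t ω)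
  set i := S.sup' hS (fun s => (s : ℕ)) + 1
  have hSi : ∀ s ∈ S, (s : ℕ) < i := fun s hs =>
    Nat.lt_succ_of_le (le_sup' (fun s : Fin n => (s : ℕ)) hs)
  have hTi : ∀ t ∈ T, i + m ≤ t := fun t ht => by
    obtain ⟨s, hs, hmax⟩ := exists_mem_eq_sup' hS (fun s : Fin n => (s : ℕ))
    have := hST s hs t ht
    omega
  convert (h i).comp (φ := fun g => ∑ s ∈ S.subtype _, g s) (ψ := fun g => ∑ t ∈ T.subtype _, g t)
    (measurable_sum _ fun j _ => measurable_pi_apply j)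
    (measurable_sum _ fun j _ => measurable_pi_apply j) using 1 <;> funext ω
  · exact (sum_subtype_of_mem (fun s => ξ s ω) hSi).symm
  · exact (sum_subtype_of_mem (fun t => ξ t ω) hTi).symm

end

def lowerBlock {n : ℕ} (m c : ℕ) : Finset (Fin n) := univ.filter fun s => (s : ℕ) + m < c

def upperBlock {n : ℕ} (c : ℕ) : Finset (Fin n) := univ.filter fun s => c ≤ (s : ℕ)

lemma card_le_of_forall_val_mem_Ico {n a k : ℕ} {S : Finset (Fin n)}
    (h : ∀ s ∈ S, (s : ℕ) ∈ Ico a (a + k)) : #S ≤ k :=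
  (card_le_card_of_injOn Fin.val h Fin.val_injective.injOn).trans (by simp)

lemma card_sdiff_lowerBlock_union_upperBlock_le {n : ℕ} (m c : ℕ) :
    #(univ \ (lowerBlock m c ∪ upperBlock c) : Finset (Fin n)) ≤ m :=
  card_le_of_forall_val_mem_Ico (a := c - m) fun s hs => by
    simp only [lowerBlock, upperBlock, Finset.mem_sdiff, mem_union, mem_filter, mem_univ, true_and,
      not_or] at hs
    simp only [mem_Ico]
    omega

lemma disjoint_lowerBlock_upperBlock {n m c : ℕ} :
    Disjoint (lowerBlock m c : Finset (Fin n)) (upperBlock c) :=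
  disjoint_filter.2 fun s _ h1 h2 => by omega

theorem MDependent.indepFun_lowerBlock_upperBlock {Ω E : Type*} [MeasurableSpace Ω]
    {μ : Measure Ω} [IsZeroOrProbabilityMeasure μ] [AddCommMonoid E] [MeasurableSpace E]
    [MeasurableAdd₂ E] {n m : ℕ} {ξ : Fin n → Ω → E} (h : MDependent m ξ μ) (c : ℕ) :
    IndepFun (fun ω => ∑ s ∈ lowerBlock m c, ξ s ω) (fun ω => ∑ t ∈ upperBlock c, ξ t ω) μ :=
  h.indepFun_sum fun s hs t ht => by
    simp only [lowerBlock, upperBlock, mem_filter, mem_univ, true_and] at hs ht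
    omega

-- the `m`-neighbourhoods of `u`, `v` and `r` cover `[min(u,v,r), max(u,v,r)]`, so every index
-- near neither `u` nor `v` and not in the two far blocks is near `r`
lemma card_filter_not_near_sdiff_le {n m : ℕ} {u v r : Fin n} (huv : near m u v)
    (hr : near m u r ∨ near m v r) :
    #((univ.filter fun s => ¬(near m u s ∨ near m v s)) \
      (lowerBlock m (min (min (u : ℕ) v) r) ∪ upperBlock (max (max (u : ℕ) v) r + m + 1))) ≤
      2 * m + 1 :=
  card_le_of_forall_val_mem_Ico (a := r - m) fun s hs => by
    simp only [lowerBlock, upperBlock, Finset.mem_sdiff, mem_union, mem_filter, mem_univ, true_and,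
      not_or] at hs
    simp only [mem_Ico]
    omega

section

variable {Ω : Type} [MeasurableSpace Ω] {μ : Measure Ω} [IsProbabilityMeasure μ] {d n m : ℕ}
  {ξ : Fin n → Ω → EuclideanSpace ℝ (Fin d)}

lemma integral_inner_Wuv_sq_le (hdep : MDependent m ξ μ) (hξ : ∀ i, MemLp (ξ i) 4 μ)
    (hmean : ∀ i, ∫ ω, ξ i ω ∂μ = 0) (hcov : covMatrix μ (fun ω => ∑ i, ξ i ω) = 1)
    {c₂ c₄ : ℝ} (hc₂0 : 0 ≤ c₂) (hc₂ : ∀ i, ∫ ω, ‖ξ i ω‖ ^ 2 ∂μ ≤ c₂)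
    (hc₄ : ∀ i, ∫ ω, ‖ξ i ω‖ ^ 4 ∂μ ≤ c₄) {u v r : Fin n} (huv : near m u v)
    (hr : near m u r ∨ near m v r) :
    ∫ ω, ⟪ξ r ω, Wuv m ξ u v ω⟫ ^ 2 ∂μ ≤
      3 * (2 * ((2 + 4 * m ^ 2 * c₂) * ∫ ω, ‖ξ r ω‖ ^ 2 ∂μ) + (2 * m + 1) ^ 2 * c₄) := by
  have hξ2 : ∀ i, MemLp (ξ i) 2 μ := fun i => (hξ i).mono_exponent (by norm_num)
  have hint : ∀ S : Finset (Fin n), Integrable (fun ω => ⟪ξ r ω, ∑ s ∈ S, ξ s ω⟫ ^ 2) μ :=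
    fun S => integrable_inner_sq (hξ r) (memLp_finsetSum S fun i _ => hξ i)
  set a := min (min (u : ℕ) v) r
  set b := max (max (u : ℕ) v) r
  set L : Finset (Fin n) := lowerBlock m a
  set R : Finset (Fin n) := upperBlock (b + m + 1)
  set U : Finset (Fin n) := univ.filter fun s => ¬(near m u s ∨ near m v s)
  set T := U \ (L ∪ R)
  have hsplit : ∀ ω, Wuv m ξ u v ω = ∑ s ∈ L, ξ s ω + ∑ s ∈ R, ξ s ω + ∑ s ∈ T, ξ s ω := by
    refine fun ω => sum_eq_add_add_sum_sdiff ?_ ?_ ?_ _ <;>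
      simp only [L, R, lowerBlock, upperBlock, subset_iff, disjoint_left, mem_filter, mem_univ,
        true_and] <;> omega
  have hrL : IndepFun (ξ r) (fun ω => ∑ s ∈ L, ξ s ω) μ := by
    simpa using (hdep.indepFun_sum (S := L) (T := {r}) fun s hs t ht => by
      simp only [L, lowerBlock, mem_filter, mem_univ, true_and, mem_singleton] at hs ht; omega).symm
  have hrR : IndepFun (ξ r) (fun ω => ∑ s ∈ R, ξ s ω) μ := by
    simpa using hdep.indepFun_sum (S := {r}) (T := R) fun s hs t ht => by
      simp only [R, upperBlock, mem_filter, mem_univ, true_and, mem_singleton] at hs ht; omega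
  have hL : ∫ ω, ⟪ξ r ω, ∑ s ∈ L, ξ s ω⟫ ^ 2 ∂μ ≤ (2 + 4 * m ^ 2 * c₂) * ∫ ω, ‖ξ r ω‖ ^ 2 ∂μ :=
    integral_inner_sum_sq_le_integral_norm_sq hξ2 hmean hcov hc₂0 hc₂
      disjoint_lowerBlock_upperBlock (hdep.indepFun_lowerBlock_upperBlock a)
      (card_sdiff_lowerBlock_union_upperBlock_le m a) hrL (hξ2 r)
  have hR : ∫ ω, ⟪ξ r ω, ∑ s ∈ R, ξ s ω⟫ ^ 2 ∂μ ≤ (2 + 4 * m ^ 2 * c₂) * ∫ ω, ‖ξ r ω‖ ^ 2 ∂μ :=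
    integral_inner_sum_sq_le_integral_norm_sq (T := lowerBlock m (b + m + 1)) hξ2 hmean hcov
      hc₂0 hc₂ disjoint_lowerBlock_upperBlock.symm (hdep.indepFun_lowerBlock_upperBlock _).symm
      (by rw [union_comm]; exact card_sdiff_lowerBlock_union_upperBlock_le m _) hrR (hξ2 r)
  have hT : ∫ ω, ⟪ξ r ω, ∑ s ∈ T, ξ s ω⟫ ^ 2 ∂μ ≤ (2 * m + 1) ^ 2 * c₄ := by
    have hc₄0 : 0 ≤ c₄ := (integral_nonneg fun ω => by positivity).trans (hc₄ r)
    refine (integral_inner_sum_sq_le T (hξ r) (fun i _ => hξ i) (hc₄ r) fun i _ => hc₄ i).trans ?_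
    gcongr
    exact_mod_cast card_filter_not_near_sdiff_le huv hr
  calc ∫ ω, ⟪ξ r ω, Wuv m ξ u v ω⟫ ^ 2 ∂μ
      = ∫ ω, (⟪ξ r ω, ∑ s ∈ L, ξ s ω⟫ + ⟪ξ r ω, ∑ s ∈ R, ξ s ω⟫
          + ⟪ξ r ω, ∑ s ∈ T, ξ s ω⟫) ^ 2 ∂μ := by simp only [hsplit, inner_add_right]
    _ ≤ _ := integral_add_add_sq_le (hint L) (hint R) (hint T)
    _ ≤ _ := by linarith

end

/-- first part of Lemma `portnoy2`: second-moment bound for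
`ξ_r · W^{(uv)}` for an `m`-dependent sequence. -/
theorem mdep_second_moment_bound :
    ∃ C : ℝ, 0 < C ∧
      ∀ (d n m : ℕ) (Ω : Type) [MeasurableSpace Ω] (μ : Measure Ω),
        IsProbabilityMeasure μ → m < n →
        ∀ (ξ : Fin n → Ω → EuclideanSpace ℝ (Fin d)) (δ : ℝ), 0 < δ →
          (∀ i, Measurable (ξ i)) →
          MDependent m ξ μ →
          (∀ i, ∫ ω, ξ i ω ∂μ = 0) →
          covMatrix μ (fun ω => ∑ i, ξ i ω) = 1 →
          (∀ i, Integrable (fun ω => ‖ξ i ω‖ ^ 6) μ) →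
          (∀ i, ∫ ω, ‖ξ i ω‖ ^ 6 ∂μ ≤ δ ^ 6) →
          ∀ u v r : Fin n, near m u v → (near m u r ∨ near m v r) →
            ∫ ω, ⟪ξ r ω, Wuv m ξ u v ω⟫ ^ 2 ∂μ ≤
              C * ((∫ ω, ‖ξ r ω‖ ^ 2 ∂μ) + ((max m 1 : ℕ) : ℝ) ^ 2 * δ ^ 4) := by
  refine ⟨150, by norm_num, ?_⟩
  intro d n m Ω _ μ _ _ ξ δ hδ hmeas hdep hmean hcov hint6 hmom6 u v r huv hr
  have hξ4 : ∀ i, MemLp (ξ i) 4 μ := fun i =>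
    ((integrable_norm_rpow_iff (hmeas i).aestronglyMeasurable (p := 6) (by norm_num)
      (by norm_num)).1 (by simpa using hint6 i)).mono_exponent (by norm_num)
  have hmom : ∀ k ≤ 6, ∀ i, ∫ ω, ‖ξ i ω‖ ^ k ∂μ ≤ 2 * δ ^ k := fun k hk i =>
    integral_pow_le_two_mul_pow (fun ω => norm_nonneg _) hδ hk (hint6 i) (hmom6 i)
  have hWuv := integral_inner_Wuv_sq_le hdep hξ4 hmean hcov (by positivity) (hmom 2 (by norm_num))
    (hmom 4 (by norm_num)) huv hr
  -- with `E|ξ_r|² ≤ 2δ²` and `2m + 1 ≤ 3 (m ∨ 1)` the bound is `12 E|ξ_r|² + 150 (m ∨ 1)² δ⁴`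
  have hmM : (m : ℝ) ≤ (max m 1 : ℕ) := by exact_mod_cast le_max_left m 1
  have h1M : (1 : ℝ) ≤ (max m 1 : ℕ) := by exact_mod_cast le_max_right m 1
  set M : ℝ := ((max m 1 : ℕ) : ℝ)
  have hm : (m : ℝ) ^ 2 * δ ^ 4 ≤ M ^ 2 * δ ^ 4 := by gcongr
  have hm1 : (2 * m + 1 : ℝ) ^ 2 * δ ^ 4 ≤ (3 * M) ^ 2 * δ ^ 4 := by gcongr; linarith
  have hE2 := hmom 2 (by norm_num) r
  have hE2nn : 0 ≤ ∫ ω, ‖ξ r ω‖ ^ 2 ∂μ := integral_nonneg fun ω => by positivity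
  nlinarith [mul_le_mul_of_nonneg_left hE2 (by positivity : (0 : ℝ) ≤ m ^ 2 * δ ^ 2)]

end Paper
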